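/- The algebra A = K⟨x,y | x² + y²⟩ has Hilbert series H_A = 1/(1 − 2t + t²) = 1/(1−t)²; equivalently, dim A_n = n + 1 for all n ≥ 0. -/

import Mathlib

noncomputable section

open Module

/-- The degree-`n` component of the free associative algebra `K⟨x,y⟩`
(realized as the monoid algebra of the free monoid on two generators), i.e.
the span of the words of length `n`. -/
def freeComponent (K : Type*) [Field K] (n : ℕ) :
    Submodule K (MonoidAlgebra K (FreeMonoid (Fin 2))) :=
  Submodule.span K
    {p | ∃ w : FreeMonoid (Fin 2), w.length = n ∧
      p = MonoidAlgebra.single w (1 : K)}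

/-- The two-sided ideal generated by a set `S`, as the `K`-span of all
products `a * s * b` with `s ∈ S`. -/
def twoSidedSpan (K : Type*) [Field K]
    (S : Set (MonoidAlgebra K (FreeMonoid (Fin 2)))) :
    Submodule K (MonoidAlgebra K (FreeMonoid (Fin 2))) :=
  Submodule.span K {p | ∃ a s b, s ∈ S ∧ p = a * s * b}

namespace Stmt19

variable (K : Type*) [Field K]

abbrev Idx : Type := (ℕ × ℕ) × Bool

/-- basis vectors of the normal-word module -/
def EE (a b : ℕ) (ε : Bool) : Idx →₀ K := Finsupp.single ((a, b), ε) 1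

/-- action of x on basis -/
def vX : Idx → (Idx →₀ K) := fun p =>
  if p.1.1 % 2 = 1 then EE K (p.1.1 - 1) (p.1.2 + 1) p.2
  else if p.1.2 = 0 then
    (if p.2 then -EE K (p.1.1 + 2) 0 false else EE K p.1.1 0 true)
  else -EE K (p.1.1 + 3) (p.1.2 - 1) p.2

def vY : Idx → (Idx →₀ K) := fun p => EE K (p.1.1 + 1) p.1.2 p.2

def opX : (Idx →₀ K) →ₗ[K] (Idx →₀ K) := Finsupp.lift _ K _ (vX K)
def opY : (Idx →₀ K) →ₗ[K] (Idx →₀ K) := Finsupp.lift _ K _ (vY K)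

lemma opX_single (p : Idx) (c : K) : opX K (Finsupp.single p c) = c • vX K p := by
  simp [opX, Finsupp.lift_apply, Finsupp.sum_single_index]

lemma opY_single (p : Idx) (c : K) : opY K (Finsupp.single p c) = c • vY K p := by
  simp [opY, Finsupp.lift_apply, Finsupp.sum_single_index]

lemma opX_EE (a b : ℕ) (ε : Bool) : opX K (EE K a b ε) = vX K ((a,b),ε) := by
  rw [EE, opX_single, one_smul]

lemma opY_EE (a b : ℕ) (ε : Bool) : opY K (EE K a b ε) = EE K (a+1) b ε := by
  rw [EE, opY_single, one_smul]; rfl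


lemma vY_eq (a b : ℕ) (ε : Bool) : vY K ((a,b),ε) = EE K (a+1) b ε := rfl

lemma vX_odd (a b : ℕ) (ε : Bool) (h : a % 2 = 1) :
    vX K ((a,b),ε) = EE K (a-1) (b+1) ε := by simp [vX, h]

lemma vX_even_pos (a b : ℕ) (ε : Bool) (h : a % 2 = 0) (hb : b ≠ 0) :
    vX K ((a,b),ε) = -EE K (a+3) (b-1) ε := by simp [vX, h, hb]

lemma vX_even_f (a : ℕ) (h : a % 2 = 0) :
    vX K ((a,0),false) = EE K a 0 true := by simp [vX, h]

lemma vX_even_t (a : ℕ) (h : a % 2 = 0) :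
    vX K ((a,0),true) = -EE K (a+2) 0 false := by simp [vX, h]

/-- X² e = - Y² e on every basis vector -/
lemma XX_EE (a b : ℕ) (ε : Bool) :
    opX K (opX K (EE K a b ε)) = -EE K (a+2) b ε := by
  rcases Nat.even_or_odd a with ha | ha
  · have ha' : a % 2 = 0 := Nat.even_iff.mp ha
    rcases Nat.eq_zero_or_pos b with hb | hb
    · subst hb
      cases ε
      · rw [opX_EE, vX_even_f K a ha', opX_EE, vX_even_t K a ha']
      · rw [opX_EE, vX_even_t K a ha', map_neg, opX_EE,
          vX_even_f K (a+2) (by omega)]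
    · have hb' : b ≠ 0 := by omega
      rw [opX_EE, vX_even_pos K a b ε ha' hb', map_neg, opX_EE,
        vX_odd K (a+3) (b-1) ε (by omega)]
      congr 2 <;> omega
  · have ha' : a % 2 = 1 := Nat.odd_iff.mp ha
    rw [opX_EE, vX_odd K a b ε ha', opX_EE,
      vX_even_pos K (a-1) (b+1) ε (by omega) (by omega)]
    congr 2 <;> omega

lemma YY_EE (a b : ℕ) (ε : Bool) :
    opY K (opY K (EE K a b ε)) = EE K (a+2) b ε := by
  rw [opY_EE, opY_EE]

/-- the key relation X² + Y² = 0 -/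
lemma rel (v : Idx →₀ K) : opX K (opX K v) + opY K (opY K v) = 0 := by
  have h : (opX K ∘ₗ opX K) + (opY K ∘ₗ opY K) = 0 := by
    apply Finsupp.lhom_ext (fun p c => ?_)
    obtain ⟨⟨a, b⟩, ε⟩ := p
    have : Finsupp.single ((a,b),ε) c = c • EE K a b ε := by simp [EE]
    simp only [LinearMap.add_apply, LinearMap.comp_apply, LinearMap.zero_apply,
      this, map_smul, XX_EE, YY_EE]
    simp
  have := LinearMap.congr_fun h v
  simpa using this

def op : Fin 2 → ((Idx →₀ K) →ₗ[K] (Idx →₀ K)) := fun l =>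
  if l = 0 then opX K else opY K

lemma op_zero : op K 0 = opX K := if_pos rfl
lemma op_one : op K 1 = opY K := if_neg (by decide)

def fw : List (Fin 2) → (Idx →₀ K)
  | [] => EE K 0 0 false
  | l :: w => op K l (fw w)

lemma fw_nil : fw K [] = EE K 0 0 false := rfl
lemma fw_cons (l : Fin 2) (w : List (Fin 2)) : fw K (l :: w) = op K l (fw K w) := rfl

def opList : List (Fin 2) → ((Idx →₀ K) →ₗ[K] (Idx →₀ K))
  | [] => LinearMap.id
  | l :: w => (op K l) ∘ₗ (opList w)

lemma fw_append (w₁ w₂ : List (Fin 2)) :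
    fw K (w₁ ++ w₂) = opList K w₁ (fw K w₂) := by
  induction w₁ with
  | nil => rfl
  | cons l w ih => simp [fw, opList, ih]

/-- the evaluation linear map -/
def phi : MonoidAlgebra K (FreeMonoid (Fin 2)) →ₗ[K] (Idx →₀ K) :=
  Finsupp.lift _ K _ (fun w => fw K (FreeMonoid.toList w)) ∘ₗ
    (MonoidAlgebra.coeffLinearEquiv K).toLinearMap

lemma phi_single (w : FreeMonoid (Fin 2)) (c : K) :
    phi K (MonoidAlgebra.single w c) = c • fw K (FreeMonoid.toList w) := by
  exact Finsupp.sum_single_index (by simp)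

lemma phi_single_mul (w : FreeMonoid (Fin 2)) (c : K)
    (z : MonoidAlgebra K (FreeMonoid (Fin 2))) :
    phi K (MonoidAlgebra.single w c * z) = c • opList K (FreeMonoid.toList w) (phi K z) := by
  induction z using MonoidAlgebra.induction_linear with
  | zero => simp
  | add f g hf hg => rw [mul_add, map_add, hf, hg]; simp [map_add, smul_add]
  | single w' c' =>
    rw [MonoidAlgebra.single_mul_single, phi_single, phi_single,
      FreeMonoid.toList_mul, fw_append, map_smul, smul_smul]

lemma x_def : MonoidAlgebra.of K (FreeMonoid (Fin 2)) (FreeMonoid.of 0) =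
    MonoidAlgebra.single (FreeMonoid.of 0) (1:K) := rfl

lemma gen_sq (i : Fin 2) :
    (MonoidAlgebra.of K (FreeMonoid (Fin 2)) (FreeMonoid.of i)) ^ 2 =
      MonoidAlgebra.single (FreeMonoid.of i * FreeMonoid.of i) (1:K) := by
  rw [sq, MonoidAlgebra.of_apply, MonoidAlgebra.single_mul_single, one_mul]

lemma toList_oo (i j : Fin 2) :
    FreeMonoid.toList (FreeMonoid.of i * FreeMonoid.of j) = [i, j] := rfl

/-- phi kills g * b for every b -/
lemma phi_g_mul (b : MonoidAlgebra K (FreeMonoid (Fin 2))) :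
    phi K (((MonoidAlgebra.of K (FreeMonoid (Fin 2)) (FreeMonoid.of 0)) ^ 2 +
      (MonoidAlgebra.of K (FreeMonoid (Fin 2)) (FreeMonoid.of 1)) ^ 2) * b) = 0 := by
  rw [add_mul, map_add, gen_sq, gen_sq, phi_single_mul, phi_single_mul, toList_oo, toList_oo]
  simp only [one_smul, opList, LinearMap.comp_apply, LinearMap.id_apply, op_zero, op_one]
  exact rel K (phi K b)

lemma phi_I (z : MonoidAlgebra K (FreeMonoid (Fin 2)))
    (hz : z ∈ {p | ∃ a s b, s ∈ ({(MonoidAlgebra.of K (FreeMonoid (Fin 2)) (FreeMonoid.of 0)) ^ 2 +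
      (MonoidAlgebra.of K (FreeMonoid (Fin 2)) (FreeMonoid.of 1)) ^ 2} : Set _) ∧ p = a * s * b}) :
    phi K z = 0 := by
  obtain ⟨a, s, b, hs, rfl⟩ := hz
  rw [Set.mem_singleton_iff] at hs
  subst hs
  rw [mul_assoc]
  induction a using MonoidAlgebra.induction_linear with
  | zero => simp
  | add f g hf hg => rw [add_mul, map_add, hf, hg, add_zero]
  | single w c =>
    rw [phi_single_mul, phi_g_mul, map_zero, smul_zero]


/-! ### normal words -/

def xyblock : ℕ → List (Fin 2)
  | 0 => []
  | b + 1 => 0 :: 1 :: xyblock b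

def NL (a b : ℕ) (ε : Bool) : List (Fin 2) :=
  List.replicate a 1 ++ (xyblock b ++ (if ε then [0] else []))

lemma length_xyblock (b : ℕ) : (xyblock b).length = 2 * b := by
  induction b with
  | zero => rfl
  | succ b ih => simp [xyblock, ih]; omega

lemma length_NL (a b : ℕ) (ε : Bool) :
    (NL a b ε).length = a + 2 * b + (if ε then 1 else 0) := by
  cases ε <;> simp [NL, length_xyblock] <;> omega

lemma fw_tail (ε : Bool) : fw K (if ε then [0] else []) = EE K 0 0 ε := by
  cases ε
  · rfl
  · rw [if_pos rfl, fw_cons, op_zero, fw_nil, opX_EE, vX_even_f K 0 rfl]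

lemma fw_xyblock (b : ℕ) (t : List (Fin 2)) (m : ℕ) (ε : Bool)
    (ht : fw K t = EE K 0 m ε) : fw K (xyblock b ++ t) = EE K 0 (b + m) ε := by
  induction b generalizing m with
  | zero => simpa [xyblock] using ht
  | succ b ih =>
    rw [show xyblock (b+1) = 0 :: 1 :: xyblock b from rfl, List.cons_append,
      List.cons_append, fw_cons, fw_cons, op_zero, op_one, ih m ht, opY_EE, opX_EE,
      vX_odd K 1 (b + m) ε rfl]
    congr 1
    omega

lemma fw_repl (a : ℕ) (t : List (Fin 2)) (m : ℕ) (ε : Bool)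
    (ht : fw K t = EE K 0 m ε) :
    fw K (List.replicate a 1 ++ t) = EE K a m ε := by
  induction a with
  | zero => simpa using ht
  | succ a ih =>
    rw [List.replicate_succ, List.cons_append, fw_cons, op_one, ih, opY_EE]

lemma fw_NL (a b : ℕ) (ε : Bool) : fw K (NL a b ε) = EE K a b ε := by
  have h1 : fw K (xyblock b ++ (if ε then [0] else [])) = EE K 0 b ε := by
    simpa using fw_xyblock K b _ 0 ε (fw_tail K ε)
  rw [NL]
  exact fw_repl K a _ b ε h1

/-! ### classification of factor-free words -/

def Bad (w : List (Fin 2)) : Prop :=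
  (∃ p q, w = p ++ ([0, 0] ++ q)) ∨ (∃ p q, w = p ++ ([0, 1, 1] ++ q))

lemma bad_cons {w : List (Fin 2)} (l : Fin 2) (h : Bad w) : Bad (l :: w) := by
  rcases h with ⟨p, q, rfl⟩ | ⟨p, q, rfl⟩
  · exact Or.inl ⟨l :: p, q, rfl⟩
  · exact Or.inr ⟨l :: p, q, rfl⟩

lemma classify : ∀ w : List (Fin 2), ¬ Bad w → ∃ a b ε, w = NL a b ε := by
  intro w
  induction w with
  | nil => exact fun _ => ⟨0, 0, false, rfl⟩
  | cons l w ih =>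
    intro hw
    have hw' : ¬ Bad w := fun h => hw (bad_cons l h)
    obtain ⟨a, b, ε, rfl⟩ := ih hw'
    fin_cases l
    · -- l = 0 (x)
      match a, b, ε with
      | 0, 0, false => exact ⟨0, 0, true, by simp [NL, xyblock]⟩
      | 0, 0, true => exact absurd (Or.inl ⟨[], [], by simp [NL, xyblock]⟩) hw
      | 0, b + 1, ε =>
        exact absurd (Or.inl ⟨[], 1 :: (xyblock b ++ (if ε then [0] else [])),
          by simp [NL, xyblock]⟩) hw
      | 1, b, ε => exact ⟨0, b + 1, ε, by simp [NL, xyblock, List.replicate_succ]⟩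
      | a + 2, b, ε =>
        refine absurd (Or.inr ⟨[], List.replicate a 1 ++
          (xyblock b ++ (if ε then [0] else [])), ?_⟩) hw
        simp [NL, List.replicate_succ]
    · -- l = 1 (y)
      exact ⟨a + 1, b, ε, by simp [NL, List.replicate_succ]⟩

/-! ### the valuation -/

def valr : List (Fin 2) → ℕ
  | [] => 0
  | l :: w => (if l = 0 then 1 else 0) + 2 * valr w

def val (w : List (Fin 2)) : ℕ := valr w.reverse

lemma valr_append (u v : List (Fin 2)) :
    valr (u ++ v) = valr u + 2 ^ u.length * valr v := by
  induction u with
  | nil => simp [valr]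
  | cons l u ih => simp [valr, ih, pow_succ]; ring

lemma val_decomp (p m q : List (Fin 2)) :
    val (p ++ (m ++ q)) = valr q.reverse + 2 ^ q.length * valr m.reverse +
      2 ^ q.length * 2 ^ m.length * valr p.reverse := by
  rw [val, List.reverse_append, List.reverse_append, valr_append, valr_append]
  simp only [List.length_reverse, List.length_append]
  ring

lemma val_lt_xx (p q : List (Fin 2)) :
    val (p ++ ([1, 1] ++ q)) < val (p ++ ([0, 0] ++ q)) := by
  rw [val_decomp, val_decomp]
  have h1 : valr (List.reverse [0, 0]) = 3 := rfl
  have h2 : valr (List.reverse [1, 1]) = 0 := rfl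
  rw [h1, h2]
  have : (0 : ℕ) < 2 ^ q.length := Nat.pow_pos (by norm_num)
  simp only [List.length_cons, List.length_nil]
  omega

lemma val_lt_xyy (p q : List (Fin 2)) :
    val (p ++ ([1, 1, 0] ++ q)) < val (p ++ ([0, 1, 1] ++ q)) := by
  rw [val_decomp, val_decomp]
  have h1 : valr (List.reverse [0, 1, 1]) = 4 := rfl
  have h2 : valr (List.reverse [1, 1, 0]) = 1 := rfl
  rw [h1, h2]
  have : (0 : ℕ) < 2 ^ q.length := Nat.pow_pos (by norm_num)
  simp only [List.length_cons, List.length_nil]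
  omega


/-! ### rewriting inside the ideal -/

/-- the defining relation -/
def g : MonoidAlgebra K (FreeMonoid (Fin 2)) :=
  (MonoidAlgebra.of K (FreeMonoid (Fin 2)) (FreeMonoid.of 0)) ^ 2 +
    (MonoidAlgebra.of K (FreeMonoid (Fin 2)) (FreeMonoid.of 1)) ^ 2

lemma oo_eq (i j : Fin 2) :
    FreeMonoid.of i * FreeMonoid.of j = FreeMonoid.ofList [i, j] := rfl

lemma single_ofList_mul (u v : List (Fin 2)) (c d : K) :
    MonoidAlgebra.single (FreeMonoid.ofList u) c *
      MonoidAlgebra.single (FreeMonoid.ofList v) d =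
    MonoidAlgebra.single (FreeMonoid.ofList (u ++ v)) (c * d) := by
  rw [MonoidAlgebra.single_mul_single, FreeMonoid.ofList_append]

lemma idXX (p q : List (Fin 2)) :
    MonoidAlgebra.single (FreeMonoid.ofList (p ++ ([0, 0] ++ q))) (1 : K) +
      MonoidAlgebra.single (FreeMonoid.ofList (p ++ ([1, 1] ++ q))) (1 : K) =
    MonoidAlgebra.single (FreeMonoid.ofList p) (1 : K) * g K *
      MonoidAlgebra.single (FreeMonoid.ofList q) (1 : K) := by
  rw [g, mul_add, add_mul, gen_sq, gen_sq, oo_eq, oo_eq]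
  rw [single_ofList_mul, single_ofList_mul, single_ofList_mul, single_ofList_mul]
  simp [List.append_assoc]

lemma idXYY (p q : List (Fin 2)) :
    MonoidAlgebra.single (FreeMonoid.ofList (p ++ ([0, 1, 1] ++ q))) (1 : K) =
      MonoidAlgebra.single (FreeMonoid.ofList (p ++ [0])) (1 : K) * g K *
        MonoidAlgebra.single (FreeMonoid.ofList q) (1 : K) -
      MonoidAlgebra.single (FreeMonoid.ofList p) (1 : K) * g K *
        MonoidAlgebra.single (FreeMonoid.ofList ([0] ++ q)) (1 : K) +
      MonoidAlgebra.single (FreeMonoid.ofList (p ++ ([1, 1, 0] ++ q))) (1 : K) := by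
  rw [g, mul_add, mul_add, add_mul, add_mul, gen_sq, gen_sq, oo_eq, oo_eq]
  rw [single_ofList_mul, single_ofList_mul, single_ofList_mul, single_ofList_mul,
    single_ofList_mul, single_ofList_mul, single_ofList_mul, single_ofList_mul]
  have e1 : (p ++ [0]) ++ [(0:Fin 2),0] ++ q = p ++ ([0,0,0] ++ q) := by simp
  have e2 : (p ++ [0]) ++ [(1:Fin 2),1] ++ q = p ++ ([0,1,1] ++ q) := by simp
  have e3 : p ++ [(0:Fin 2),0] ++ ([0] ++ q) = p ++ ([0,0,0] ++ q) := by simp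
  have e4 : p ++ [(1:Fin 2),1] ++ ([0] ++ q) = p ++ ([1,1,0] ++ q) := by simp
  simp only [one_mul, List.append_assoc] at e1 e2 e3 e4 ⊢
  rw [e1, e2, e3, e4]
  abel

/-- membership of products in the two-sided span -/
lemma mem_I (a b : MonoidAlgebra K (FreeMonoid (Fin 2))) :
    a * g K * b ∈ twoSidedSpan K {g K} := by
  exact Submodule.subset_span ⟨a, g K, b, rfl, rfl⟩

/-! ### spanning -/

def NS (n : ℕ) : Set (MonoidAlgebra K (FreeMonoid (Fin 2))) :=
  {z | ∃ a b ε, a + 2 * b + (if ε then 1 else 0) = n ∧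
    z = MonoidAlgebra.single (FreeMonoid.ofList (NL a b ε)) (1 : K)}

def Tn (n : ℕ) : Submodule K (MonoidAlgebra K (FreeMonoid (Fin 2))) :=
  Submodule.span K (NS K n) ⊔ twoSidedSpan K {g K}

lemma to_span_aux (n : ℕ) : ∀ (N : ℕ) (w : List (Fin 2)), val w < N → w.length = n →
    MonoidAlgebra.single (FreeMonoid.ofList w) (1 : K) ∈ Tn K n := by
  intro N
  induction N with
  | zero => exact fun w h _ => absurd h (by omega)
  | succ N ih =>
    intro w hval hlen
    by_cases hbad : Bad w
    · rcases hbad with ⟨p, q, rfl⟩ | ⟨p, q, rfl⟩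
      · have h2 : MonoidAlgebra.single (FreeMonoid.ofList (p ++ ([1,1] ++ q))) (1:K) ∈ Tn K n := by
          refine ih _ ?_ (by simpa using hlen)
          have := val_lt_xx p q
          omega
        have heq := idXX K p q
        have : MonoidAlgebra.single (FreeMonoid.ofList (p ++ ([0,0] ++ q))) (1:K) =
            MonoidAlgebra.single (FreeMonoid.ofList p) (1:K) * g K *
              MonoidAlgebra.single (FreeMonoid.ofList q) (1:K) -
            MonoidAlgebra.single (FreeMonoid.ofList (p ++ ([1,1] ++ q))) (1:K) := by
          rw [← heq]; abel
        rw [this]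
        exact sub_mem (Submodule.mem_sup_right (mem_I K _ _)) h2
      · have h2 : MonoidAlgebra.single (FreeMonoid.ofList (p ++ ([1,1,0] ++ q))) (1:K) ∈ Tn K n := by
          refine ih _ ?_ (by simpa using hlen)
          have := val_lt_xyy p q
          omega
        rw [idXYY K p q]
        exact add_mem (sub_mem (Submodule.mem_sup_right (mem_I K _ _))
          (Submodule.mem_sup_right (mem_I K _ _))) h2
    · obtain ⟨a, b, ε, rfl⟩ := classify w hbad
      refine Submodule.mem_sup_left (Submodule.subset_span ⟨a, b, ε, ?_, rfl⟩)
      rw [← hlen, length_NL]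

lemma to_span (n : ℕ) (w : List (Fin 2)) (hlen : w.length = n) :
    MonoidAlgebra.single (FreeMonoid.ofList w) (1 : K) ∈ Tn K n :=
  to_span_aux K n (val w + 1) w (Nat.lt_succ_self _) hlen


/-! ### the basis of the quotient -/

def keyIdx (n j : ℕ) : Idx := ((j, (n - j) / 2), decide ((n - j) % 2 = 1))

def Wrd (n j : ℕ) : List (Fin 2) := NL j ((n - j) / 2) (decide ((n - j) % 2 = 1))

lemma length_Wrd {n j : ℕ} (h : j ≤ n) : (Wrd n j).length = n := by
  rw [Wrd, length_NL]
  have hdm := Nat.div_add_mod (n - j) 2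
  have hlt : (n - j) % 2 < 2 := Nat.mod_lt _ (by norm_num)
  by_cases h2 : (n - j) % 2 = 1 <;> simp [h2] <;> omega

lemma fw_Wrd (n j : ℕ) : fw K (Wrd n j) = Finsupp.single (keyIdx n j) 1 := by
  rw [Wrd, fw_NL]; rfl

lemma NL_eq_Wrd {n a b : ℕ} {ε : Bool} (h : a + 2 * b + (if ε then 1 else 0) = n) :
    NL a b ε = Wrd n a := by
  cases ε
  · simp only [Bool.false_eq_true, if_false] at h
    rw [Wrd]
    have h1 : (n - a) / 2 = b := by omega
    have h2 : (n - a) % 2 = 0 := by omega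
    rw [h1, h2]
    norm_num
  · simp only [if_true] at h
    rw [Wrd]
    have h1 : (n - a) / 2 = b := by omega
    have h2 : (n - a) % 2 = 1 := by omega
    rw [h1, h2]
    norm_num

lemma mem_V (n : ℕ) (w : List (Fin 2)) (hw : w.length = n) :
    MonoidAlgebra.single (FreeMonoid.ofList w) (1:K) ∈ freeComponent K n :=
  Submodule.subset_span ⟨FreeMonoid.ofList w, hw, rfl⟩

lemma NS_le_V (n : ℕ) : Submodule.span K (NS K n) ≤ freeComponent K n := by
  rw [Submodule.span_le]
  rintro z ⟨a, b, ε, hlen, rfl⟩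
  exact mem_V K n _ (by rw [length_NL]; exact hlen)

lemma phi_vanish (z : MonoidAlgebra K (FreeMonoid (Fin 2)))
    (hz : z ∈ twoSidedSpan K {g K}) : phi K z = 0 := by
  induction hz using Submodule.span_induction with
  | mem x h => exact phi_I K x h
  | zero => simp
  | add x y _ _ hx hy => rw [map_add, hx, hy, add_zero]
  | smul a x _ hx => rw [map_smul, hx, smul_zero]

theorem finrank_component (n : ℕ) :
    finrank K (↥(freeComponent K n) ⧸
      Submodule.comap (freeComponent K n).subtype (twoSidedSpan K {g K})) = n + 1 := by
  classical
  set V := freeComponent K n with hV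
  set N := Submodule.comap V.subtype (twoSidedSpan K {g K}) with hN
  have hmem : ∀ j : Fin (n+1),
      MonoidAlgebra.single (FreeMonoid.ofList (Wrd n j)) (1:K) ∈ V :=
    fun j => mem_V K n _ (length_Wrd (by omega))
  set qv : Fin (n+1) → (↥V ⧸ N) := fun j => N.mkQ ⟨_, hmem j⟩ with hqv
  have hind : LinearIndependent K qv := by
    rw [Fintype.linearIndependent_iff]
    intro c hc
    have h1 : (∑ j, c j • (⟨_, hmem j⟩ : V)) ∈ N := by
      rw [← Submodule.Quotient.mk_eq_zero, ← Submodule.mkQ_apply, map_sum]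
      simp only [hqv] at hc
      simpa only [map_smul] using hc
    have h2 : (∑ j, c j • MonoidAlgebra.single (FreeMonoid.ofList (Wrd n j)) (1:K))
        ∈ twoSidedSpan K {g K} := by
      have := h1
      rw [hN, Submodule.mem_comap] at this
      simpa [map_sum, map_smul] using this
    have h3 := phi_vanish K _ h2
    rw [map_sum] at h3
    simp only [map_smul, phi_single, one_smul] at h3
    have h4 : (∑ j : Fin (n+1), c j • Finsupp.single (keyIdx n j) (1:K)) = 0 := by
      rw [← h3]
      refine Finset.sum_congr rfl fun j _ => ?_
      rw [show FreeMonoid.toList (FreeMonoid.ofList (Wrd n (j:ℕ))) = Wrd n (j:ℕ) from rfl,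
        fw_Wrd]
    intro j0
    have h5 := DFunLike.congr_fun h4 (keyIdx n j0)
    rw [Finsupp.finset_sum_apply] at h5
    simp only [Finsupp.smul_apply, Finsupp.single_apply, smul_eq_mul, mul_ite, mul_one,
      mul_zero, Finsupp.coe_zero, Pi.zero_apply] at h5
    rw [Finset.sum_eq_single j0] at h5
    · rwa [if_pos rfl] at h5
    · intro j _ hj
      rw [if_neg]
      intro hk
      exact hj (Fin.ext (by simpa [keyIdx] using congrArg (fun p => p.1.1) hk))
    · intro h; exact absurd (Finset.mem_univ j0) h
  have mkQ_congr : ∀ (u v : MonoidAlgebra K (FreeMonoid (Fin 2))) (hu : u ∈ V)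
      (hv : v ∈ V), u = v → N.mkQ ⟨u, hu⟩ = N.mkQ ⟨v, hv⟩ := by
    rintro u v hu hv rfl; rfl
  have claimNS : ∀ s, s ∈ Submodule.span K (NS K n) → ∀ hs : s ∈ V,
      N.mkQ ⟨s, hs⟩ ∈ Submodule.span K (Set.range qv) := by
    intro s hs0
    induction hs0 using Submodule.span_induction with
    | mem z hz =>
      intro hsV
      obtain ⟨a, b, ε, hlen, rfl⟩ := hz
      have ha : a ≤ n := by cases ε <;> simp at hlen <;> omega
      refine Submodule.subset_span ⟨⟨a, by omega⟩, ?_⟩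
      exact mkQ_congr _ _ _ _ (by rw [NL_eq_Wrd hlen])
    | zero =>
      intro h
      have : (⟨(0 : MonoidAlgebra K (FreeMonoid (Fin 2))), h⟩ : V) = 0 := rfl
      rw [this, map_zero]
      exact zero_mem _
    | add u v hu0 hv0 ihu ihv =>
      intro h
      have huV : u ∈ V := NS_le_V K n hu0
      have hvV : v ∈ V := NS_le_V K n hv0
      have : (⟨u + v, h⟩ : V) = ⟨u, huV⟩ + ⟨v, hvV⟩ := rfl
      rw [this, map_add]
      exact add_mem (ihu huV) (ihv hvV)
    | smul a u hu0 ihu =>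
      intro h
      have huV : u ∈ V := NS_le_V K n hu0
      have : (⟨a • u, h⟩ : V) = a • ⟨u, huV⟩ := rfl
      rw [this, map_smul]
      exact Submodule.smul_mem _ _ (ihu huV)
  have claim : ∀ m, m ∈ V → ∀ hm : m ∈ V,
      N.mkQ ⟨m, hm⟩ ∈ Submodule.span K (Set.range qv) := by
    intro m hm0
    induction hm0 using Submodule.span_induction with
    | mem z hz =>
      intro hm
      obtain ⟨w, hwlen, rfl⟩ := hz
      have hts := to_span K n (FreeMonoid.toList w) hwlen
      rw [FreeMonoid.ofList_toList] at hts
      rw [Tn] at hts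
      obtain ⟨s, hs, i, hi, hsum⟩ := Submodule.mem_sup.mp hts
      have hsV : s ∈ V := NS_le_V K n hs
      have hiV : i ∈ V := by
        have : i = MonoidAlgebra.single w 1 - s := by rw [← hsum]; abel
        rw [this]
        exact sub_mem hm hsV
      have hsplit : (⟨MonoidAlgebra.single w 1, hm⟩ : V) = ⟨s, hsV⟩ + ⟨i, hiV⟩ :=
        Subtype.ext hsum.symm
      rw [hsplit, map_add]
      have hizero : N.mkQ ⟨i, hiV⟩ = 0 := by
        rw [Submodule.mkQ_apply, Submodule.Quotient.mk_eq_zero]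
        exact hi
      rw [hizero, add_zero]
      exact claimNS s hs hsV
    | zero =>
      intro h
      have : (⟨(0 : MonoidAlgebra K (FreeMonoid (Fin 2))), h⟩ : V) = 0 := rfl
      rw [this, map_zero]; exact zero_mem _
    | add u v hu0 hv0 ihu ihv =>
      intro h
      have : (⟨u + v, h⟩ : V) = ⟨u, hu0⟩ + ⟨v, hv0⟩ := rfl
      rw [this, map_add]
      exact add_mem (ihu hu0) (ihv hv0)
    | smul a u hu0 ihu =>
      intro h
      have : (⟨a • u, h⟩ : V) = a • ⟨u, hu0⟩ := rfl
      rw [this, map_smul]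
      exact Submodule.smul_mem _ _ (ihu hu0)
  have hsp : ⊤ ≤ Submodule.span K (Set.range qv) := by
    rintro q -
    obtain ⟨⟨m, hm⟩, rfl⟩ := Submodule.mkQ_surjective N q
    exact claim m hm hm
  have B := Basis.mk hind hsp
  rw [Module.finrank_eq_card_basis B, Fintype.card_fin]

end Stmt19

/-- The algebra `A = K⟨x,y | x² + y²⟩` over a field of characteristic `≠ 2`,
graded by word degree, has `dim A_n = n + 1` for all `n ≥ 0` (where `A_n` is
the image of the degree-`n` component of the free algebra in the quotient by
the two-sided ideal generated by `x² + y²`); hence its Hilbert series is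
`H_A = 1/(1 − 2t + t²) = 1/(1 − t)²`. -/
theorem stmt_19 (K : Type*) [Field K] (h2 : (2 : K) ≠ 0) :
    letI x : MonoidAlgebra K (FreeMonoid (Fin 2)) :=
      MonoidAlgebra.of K (FreeMonoid (Fin 2)) (FreeMonoid.of 0)
    letI y : MonoidAlgebra K (FreeMonoid (Fin 2)) :=
      MonoidAlgebra.of K (FreeMonoid (Fin 2)) (FreeMonoid.of 1)
    letI I := twoSidedSpan K {x ^ 2 + y ^ 2}
    (∀ n : ℕ, finrank K (↥(freeComponent K n) ⧸
        (Submodule.comap (freeComponent K n).subtype I)) = n + 1) ∧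
    PowerSeries.mk (fun n : ℕ => ((n : ℚ) + 1)) =
      (1 - 2 * PowerSeries.X + PowerSeries.X ^ 2)⁻¹ := by
  refine ⟨fun n => Stmt19.finrank_component K n, ?_⟩
  have hc : PowerSeries.constantCoeff (R := ℚ) (1 - 2 * PowerSeries.X + PowerSeries.X ^ 2) ≠ 0 := by
    simp
  rw [PowerSeries.eq_inv_iff_mul_eq_one hc]
  have key := PowerSeries.mk_add_choose_mul_one_sub_pow_eq_one (S := ℚ) (d := 1)
  have e1 : (PowerSeries.mk fun n : ℕ => ((n : ℚ) + 1)) =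
      (PowerSeries.mk fun n : ℕ => ((Nat.choose (1 + n) 1 : ℕ) : ℚ)) := by
    ext n
    simp [Nat.choose_one_right]
    push_cast
    ring
  have e2 : (1 - 2 * PowerSeries.X + PowerSeries.X ^ 2 : PowerSeries ℚ) =
      (1 - PowerSeries.X) ^ 2 := by ring
  rw [e1, e2]
  exact key
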